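/- arXiv:2011.11129 — 4 statements merged into one kernel-verified Lean document; each statement's English description precedes it below -/
import Mathlib

section
/- Let M be a lazy reversible ergodic Markov chain on a finite state space Ω with stationary distribution π, and let f : Ω → ℝ. For every pair of positive integers T ≤ T′, the trace variances satisfy T·v_T ≤ T′·v_{T′}; in particular v_π ≤ 2·v₂ ≤ 3·v₃ ≤ ⋯, where v_π = Var_π[f]. -/
/-!
With `g = f - π f`, the autocovariance at lag `k` is `γ k = ⟨g, M^k g⟩_π`, and stationarity turns
the trace variance into `T v_T = (1/T) ∑_{i,j<T} γ |i - j| = ∑_{k<T} 2 (1 - k/T) γ k - γ 0`.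
The weights `2 (1 - k/T)` grow with `T`, so it suffices that every `γ k` is nonnegative.
Reversibility makes `diag π * M^k` a congruence `(M^m)ᵀ * A * M^m` with `A = diag π` (`k = 2m`) or
`A = diag π * M` (`k = 2m + 1`), and laziness makes `diag π * M` a symmetric nonnegative matrix
dominated by its diagonal, hence positive semidefinite.
-/

open Finset
open scoped BigOperators Classical

section MarkovDefs

variable {Ω : Type*} [Fintype Ω] [DecidableEq Ω]

/-- `M` is a (row-)stochastic matrix: the transition matrix of a Markov chain. -/
def IsStochastic (M : Matrix Ω Ω ℝ) : Prop :=
  (∀ x y, 0 ≤ M x y) ∧ ∀ x, ∑ y, M x y = 1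

/-- `p` is a probability distribution on `Ω`. -/
def IsProbDist (p : Ω → ℝ) : Prop :=
  (∀ x, 0 ≤ p x) ∧ ∑ x, p x = 1

/-- `p` is a stationary distribution of the chain `M`. -/
def IsStationaryDist (M : Matrix Ω Ω ℝ) (p : Ω → ℝ) : Prop :=
  IsProbDist p ∧ ∀ y, ∑ x, p x * M x y = p y

/-- Ergodicity (irreducibility and aperiodicity, i.e. primitivity):
some power of `M` is entrywise positive. -/
def IsErgodic (M : Matrix Ω Ω ℝ) : Prop :=
  ∃ k : ℕ, ∀ x y, 0 < (M ^ k) x y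

/-- The chain is lazy: each self-loop probability is at least `1/2`. -/
def IsLazy (M : Matrix Ω Ω ℝ) : Prop :=
  ∀ x, (1 : ℝ) / 2 ≤ M x x

/-- Reversibility (detailed balance) of `M` with respect to `p`. -/
def IsReversible (M : Matrix Ω Ω ℝ) (p : Ω → ℝ) : Prop :=
  ∀ x y, p x * M x y = p y * M y x

/-- Mean of `f` under the distribution `p`. -/
noncomputable def stMean (p : Ω → ℝ) (f : Ω → ℝ) : ℝ := ∑ x, p x * f x

/-- Variance of `f` under the distribution `p`. -/
noncomputable def stVar (p : Ω → ℝ) (f : Ω → ℝ) : ℝ :=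
  ∑ x, p x * (f x - stMean p f) ^ 2

/-- Probability that a stationary trace of length `T` of the chain `M`
(started in `p`) equals `x`. -/
noncomputable def traceProb (M : Matrix Ω Ω ℝ) (p : Ω → ℝ) (T : ℕ) (x : Fin T → Ω) : ℝ :=
  (if h : 0 < T then p (x ⟨0, h⟩) else 1) *
    ∏ i : Fin T, if h : (i : ℕ) + 1 < T then M (x i) (x ⟨(i : ℕ) + 1, h⟩) else 1

/-- Expectation of a functional `F` of a stationary length-`T` trace of `M`. -/
noncomputable def traceExp (M : Matrix Ω Ω ℝ) (p : Ω → ℝ) (T : ℕ)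
    (F : (Fin T → Ω) → ℝ) : ℝ :=
  ∑ x : Fin T → Ω, traceProb M p T x * F x

/-- The trace variance `v_T`: the variance of the trace average
`(1/T) ∑ᵢ f(Xᵢ)` along a stationary length-`T` trace of `M`. -/
noncomputable def traceVar (M : Matrix Ω Ω ℝ) (p : Ω → ℝ) (f : Ω → ℝ) (T : ℕ) : ℝ :=
  traceExp M p T fun x => ((∑ i, f (x i)) / (T : ℝ) - stMean p f) ^ 2

/-- Stationary autocovariance of `f` at lag `i`: `Cov(f(X₁), f(X_{1+i}))`. -/
noncomputable def autocov (M : Matrix Ω Ω ℝ) (p : Ω → ℝ) (f : Ω → ℝ) (i : ℕ) : ℝ :=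
  ∑ x, ∑ y, p x * (M ^ i) x y * (f x - stMean p f) * (f y - stMean p f)

/-- `μ` is a (real) eigenvalue of the matrix `M`. -/
def IsEigenvalue (M : Matrix Ω Ω ℝ) (μ : ℝ) : Prop :=
  ∃ v : Ω → ℝ, v ≠ 0 ∧ M.mulVec v = μ • v

/-- The second largest absolute eigenvalue of `M` :
the largest absolute value of an eigenvalue other than `1`. -/
noncomputable def secondEigenvalue (M : Matrix Ω Ω ℝ) : ℝ :=
  sSup {s : ℝ | ∃ μ : ℝ, IsEigenvalue M μ ∧ μ ≠ 1 ∧ s = |μ|}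

/-- Relaxation time `τ_rel = 1 / (1 - λ)`. -/
noncomputable def relaxTime (M : Matrix Ω Ω ℝ) : ℝ := 1 / (1 - secondEigenvalue M)

/-- Total variation distance between two distributions on `Ω`. -/
noncomputable def tvDist (p q : Ω → ℝ) : ℝ := (∑ x, |p x - q x|) / 2

/-- Mixing time: least `t` such that from every initial distribution the chain is
within total variation `1/4` of `p` after `t` steps. -/
noncomputable def mixingTime (M : Matrix Ω Ω ℝ) (p : Ω → ℝ) : ℕ :=
  sInf {t : ℕ | ∀ ν : Ω → ℝ, IsProbDist ν →
    tvDist (fun y => ∑ x, ν x * (M ^ t) x y) p ≤ 1 / 4}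

/-- The `T`-trace chain `M^{(T)}` for `T = n + 1`, on state space `Fin (n+1) → Ω`. -/
noncomputable def traceChain (M : Matrix Ω Ω ℝ) (n : ℕ) :
    Matrix (Fin (n + 1) → Ω) (Fin (n + 1) → Ω) ℝ :=
  fun a b => M (a (Fin.last n)) (b 0) * ∏ i : Fin n, M (b i.castSucc) (b i.succ)

end MarkovDefs

open Matrix

section Reversible

variable {Ω : Type*} [Fintype Ω] [DecidableEq Ω]

theorem posSemidef_diagonal_rowSum_add {B : Matrix Ω Ω ℝ} (hB : B.IsSymm)
    (hB0 : ∀ x y, 0 ≤ B x y) : (diagonal (fun x => ∑ y, B x y) + B).PosSemidef := by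
  refine .of_dotProduct_mulVec_nonneg
    (isHermitian_iff_isSymm.2 ((isSymm_diagonal _).add hB)) fun h => ?_
  have hswap : ∑ x, ∑ y, B x y * h y ^ 2 = ∑ x, ∑ y, B x y * h x ^ 2 := by
    rw [sum_comm]
    exact sum_congr rfl fun x _ => sum_congr rfl fun y _ => by rw [hB.apply]
  have hquad : star h ⬝ᵥ (diagonal (fun x => ∑ y, B x y) + B) *ᵥ h
      = (∑ x, ∑ y, B x y * (h x + h y) ^ 2) / 2 := by
    have hexpand : ∑ x, ∑ y, B x y * (h x + h y) ^ 2 = ∑ x, ∑ y, B x y * h x ^ 2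
        + ∑ x, ∑ y, B x y * h y ^ 2 + 2 * ∑ x, ∑ y, h x * (B x y * h y) := by
      simp only [mul_sum, ← sum_add_distrib]
      exact sum_congr rfl fun x _ => sum_congr rfl fun y _ => by ring
    have hlhs : star h ⬝ᵥ (diagonal (fun x => ∑ y, B x y) + B) *ᵥ h
        = ∑ x, ∑ y, B x y * h x ^ 2 + ∑ x, ∑ y, h x * (B x y * h y) := by
      simp only [star_trivial, add_mulVec, dotProduct, Pi.add_apply, mulVec_diagonal]
      simp only [mulVec, dotProduct, mul_add, sum_add_distrib, mul_sum, sum_mul]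
      congr 1
      exact sum_congr rfl fun x _ => sum_congr rfl fun y _ => by ring
    rw [hlhs, hexpand, hswap]
    ring
  rw [hquad]
  exact div_nonneg (sum_nonneg fun x _ => sum_nonneg fun y _ =>
    mul_nonneg (hB0 x y) (sq_nonneg _)) zero_le_two

variable {M : Matrix Ω Ω ℝ} {p : Ω → ℝ}

theorem IsLazy.posSemidef_diagonal_mul (hlazy : IsLazy M) (hM : IsStochastic M)
    (hrev : IsReversible M p) (hp : ∀ x, 0 ≤ p x) : (diagonal p * M).PosSemidef := by
  set B := diagonal p * M - diagonal fun x => p x / 2 with hBdef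
  have hB_apply : ∀ x y, B x y = p x * M x y - if x = y then p x / 2 else 0 := fun x y => by
    simp [hBdef, diagonal_apply]
  have hB : B.IsSymm := by
    refine IsSymm.ext fun x y => ?_
    rw [hB_apply, hB_apply, hrev, eq_comm]
    split_ifs with h h' <;> simp_all
  have hB0 : ∀ x y, 0 ≤ B x y := fun x y => by
    rw [hB_apply]
    split_ifs with h
    · subst h; nlinarith [hlazy x, hp x]
    · simpa using mul_nonneg (hp x) (hM.1 x y)
  have hrow : ∀ x, ∑ y, B x y = p x / 2 := fun x => by
    simp only [hB_apply, sum_sub_distrib, ← mul_sum, hM.2, sum_ite_eq, mem_univ, if_true]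
    ring
  have hsplit : diagonal p * M = diagonal (fun x => ∑ y, B x y) + B := by
    rw [show (fun x => ∑ y, B x y) = fun x => p x / 2 from funext hrow, hBdef, add_sub_cancel]
  rw [hsplit]
  exact posSemidef_diagonal_rowSum_add hB hB0

theorem IsReversible.diagonal_mul_pow (hrev : IsReversible M p) (k : ℕ) :
    diagonal p * M ^ k = (M ^ k)ᵀ * diagonal p := by
  have hstep : diagonal p * M = Mᵀ * diagonal p := by
    ext x y
    rw [diagonal_mul, mul_diagonal, transpose_apply, hrev, mul_comm]
  induction k with
  | zero => simp
  | succ k ih => rw [pow_succ, ← mul_assoc, ih, mul_assoc, hstep, ← mul_assoc,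
      ← transpose_mul, ← pow_succ', pow_succ]

theorem IsReversible.posSemidef_diagonal_mul_pow (hrev : IsReversible M p) (hp : ∀ x, 0 ≤ p x)
    (hpsd : (diagonal p * M).PosSemidef) (k : ℕ) : (diagonal p * M ^ k).PosSemidef := by
  obtain ⟨m, rfl | rfl⟩ := Nat.even_or_odd' k
  · have h : diagonal p * M ^ (2 * m) = (M ^ m)ᴴ * diagonal p * M ^ m := by
      rw [two_mul, pow_add, ← mul_assoc, hrev.diagonal_mul_pow,
        conjTranspose_eq_transpose_of_trivial]
    rw [h]
    exact (posSemidef_diagonal_iff.2 hp).conjTranspose_mul_mul_same _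
  · have h : diagonal p * M ^ (2 * m + 1) = (M ^ m)ᴴ * (diagonal p * M) * M ^ m := by
      rw [show 2 * m + 1 = m + (1 + m) by ring, pow_add, pow_add, pow_one, ← mul_assoc,
        hrev.diagonal_mul_pow, conjTranspose_eq_transpose_of_trivial, mul_assoc, mul_assoc,
        mul_assoc]
    rw [h]
    exact hpsd.conjTranspose_mul_mul_same _

theorem autocov_eq_dotProduct (M : Matrix Ω Ω ℝ) (p f : Ω → ℝ) (k : ℕ) :
    autocov M p f k = (fun x => f x - stMean p f) ⬝ᵥ
      (diagonal p * M ^ k) *ᵥ fun x => f x - stMean p f := by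
  simp only [autocov, dotProduct, mulVec, diagonal_mul, mul_sum]
  exact sum_congr rfl fun x _ => sum_congr rfl fun y _ => by ring

theorem IsLazy.autocov_nonneg (hlazy : IsLazy M) (hM : IsStochastic M)
    (hrev : IsReversible M p) (hp : ∀ x, 0 ≤ p x) (f : Ω → ℝ) (k : ℕ) :
    0 ≤ autocov M p f k := by
  rw [autocov_eq_dotProduct]
  simpa using ((hrev.posSemidef_diagonal_mul_pow hp
    (hlazy.posSemidef_diagonal_mul hM hrev hp)) k).dotProduct_mulVec_nonneg
      fun x => f x - stMean p f

end Reversible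

section Trace

variable {Ω : Type*} {M : Matrix Ω Ω ℝ} {p : Ω → ℝ} {n : ℕ}

theorem traceProb_succ (x : Fin (n + 1) → Ω) :
    traceProb M p (n + 1) x = p (x 0) * ∏ i : Fin n, M (x i.castSucc) (x i.succ) := by
  rw [traceProb, dif_pos n.succ_pos, Fin.prod_univ_castSucc, dif_neg (by simp), mul_one]
  refine congrArg _ (prod_congr rfl fun i _ => ?_)
  rw [dif_pos (by simp)]
  rfl

theorem traceProb_snoc (y : Fin (n + 1) → Ω) (b : Ω) :
    traceProb M p (n + 2) (Fin.snoc y b) = traceProb M p (n + 1) y * M (y (Fin.last n)) b := by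
  rw [traceProb_succ, traceProb_succ, Fin.prod_univ_castSucc]
  simp only [← Fin.castSucc_zero, Fin.snoc_castSucc, Fin.succ_castSucc, Fin.succ_last,
    Fin.snoc_last]
  ring

theorem traceProb_cons (a : Ω) (y : Fin (n + 1) → Ω) :
    traceProb M p (n + 2) (Fin.cons a y) =
      p a * M a (y 0) * ∏ i : Fin n, M (y i.castSucc) (y i.succ) := by
  rw [traceProb_succ, Fin.prod_univ_succ]
  simp only [Fin.cons_zero, Fin.castSucc_zero, Fin.cons_succ, ← Fin.succ_castSucc]
  ring

variable [Fintype Ω]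

theorem sum_fin_succ_pi_eq_sum_snoc {β : Type*} [AddCommMonoid β] (F : (Fin (n + 1) → Ω) → β) :
    ∑ x, F x = ∑ y : Fin n → Ω, ∑ b, F (Fin.snoc y b) := by
  rw [← (Fin.snocEquiv fun _ => Ω).sum_comp, Fintype.sum_prod_type, sum_comm]
  rfl

theorem sum_fin_succ_pi_eq_sum_cons {β : Type*} [AddCommMonoid β] (F : (Fin (n + 1) → Ω) → β) :
    ∑ x, F x = ∑ a, ∑ y : Fin n → Ω, F (Fin.cons a y) := by
  rw [← (Fin.consEquiv fun _ => Ω).sum_comp, Fintype.sum_prod_type]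
  rfl

theorem traceExp_mul_last (G : (Fin (n + 1) → Ω) → ℝ) (ψ : Ω → ℝ) :
    traceExp M p (n + 2) (fun x => G (Fin.init x) * ψ (x (Fin.last _))) =
      traceExp M p (n + 1) (fun y => G y * (M *ᵥ ψ) (y (Fin.last n))) := by
  rw [traceExp, sum_fin_succ_pi_eq_sum_snoc]
  refine sum_congr rfl fun y _ => ?_
  simp only [traceProb_snoc, Fin.init_snoc, Fin.snoc_last, mulVec, dotProduct, mul_sum]
  exact sum_congr rfl fun b _ => by ring

theorem traceExp_comp_init (hrow : ∀ x, ∑ y, M x y = 1) (G : (Fin (n + 1) → Ω) → ℝ) :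
    traceExp M p (n + 2) (G ∘ Fin.init) = traceExp M p (n + 1) G := by
  have h := traceExp_mul_last (M := M) (p := p) G fun _ => 1
  simpa [Function.comp_def, mulVec, dotProduct, hrow] using h

theorem traceExp_comp_tail (hst : ∀ y, ∑ x, p x * M x y = p y) (G : (Fin (n + 1) → Ω) → ℝ) :
    traceExp M p (n + 2) (G ∘ Fin.tail) = traceExp M p (n + 1) G := by
  rw [traceExp, sum_fin_succ_pi_eq_sum_cons, sum_comm]
  refine sum_congr rfl fun y _ => ?_
  simp only [Function.comp_apply, Fin.tail_cons, traceProb_cons]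
  rw [← sum_mul, ← sum_mul, hst, traceProb_succ]

variable [DecidableEq Ω]

theorem traceExp_first_mul_last (φ ψ : Ω → ℝ) :
    traceExp M p (n + 1) (fun x => φ (x 0) * ψ (x (Fin.last n))) =
      φ ⬝ᵥ (diagonal p * M ^ n) *ᵥ ψ := by
  induction n generalizing ψ with
  | zero =>
    rw [traceExp, ← (Equiv.funUnique (Fin 1) Ω).symm.sum_comp]
    simp [traceProb_succ, dotProduct, mulVec_diagonal, mul_left_comm]
  | succ n ih =>
    have h := traceExp_mul_last (M := M) (p := p) (fun y : Fin (n + 1) → Ω => φ (y 0)) ψ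
    rw [pow_succ, ← mul_assoc, ← mulVec_mulVec, ← ih]
    exact h

theorem traceExp_mul_of_le (hrow : ∀ x, ∑ y, M x y = 1) (hst : ∀ y, ∑ x, p x * M x y = p y)
    (φ ψ : Ω → ℝ) {i j : Fin (n + 1)} (hij : i ≤ j) :
    traceExp M p (n + 1) (fun x => φ (x i) * ψ (x j)) =
      φ ⬝ᵥ (diagonal p * M ^ ((j : ℕ) - i)) *ᵥ ψ := by
  induction n with
  | zero =>
    obtain rfl : i = 0 := Subsingleton.elim (α := Fin 1) _ _
    obtain rfl : j = Fin.last 0 := Subsingleton.elim (α := Fin 1) _ _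
    exact traceExp_first_mul_last φ ψ
  | succ n ih =>
    cases j using Fin.lastCases with
    | last =>
      cases i using Fin.cases with
      | zero => exact traceExp_first_mul_last φ ψ
      | succ i =>
        have h := traceExp_comp_tail hst fun y => φ (y i) * ψ (y (Fin.last n))
        have hlag : (Fin.last (n + 1) : ℕ) - i.succ = (Fin.last n : ℕ) - i := by simp
        rw [hlag, ← ih (Fin.le_last i), ← h]
        rfl
    | cast j =>
      cases i using Fin.lastCases with
      | last => exact absurd hij (not_le.2 (Fin.castSucc_lt_last j))
      | cast i =>
        have h := traceExp_comp_init (p := p) hrow fun y => φ (y i) * ψ (y j)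
        rw [Fin.val_castSucc, Fin.val_castSucc, ← ih (Fin.castSucc_le_castSucc_iff.1 hij), ← h]
        rfl

theorem traceExp_centered_mul_eq_autocov (hrow : ∀ x, ∑ y, M x y = 1)
    (hst : ∀ y, ∑ x, p x * M x y = p y) (f : Ω → ℝ) (i j : Fin (n + 1)) :
    traceExp M p (n + 1) (fun x => (f (x i) - stMean p f) * (f (x j) - stMean p f)) =
      autocov M p f (Nat.dist i j) := by
  set g : Ω → ℝ := fun x => f x - stMean p f
  rw [autocov_eq_dotProduct]
  rcases le_total i j with h | h
  · rw [Nat.dist_eq_sub_of_le h]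
    exact traceExp_mul_of_le hrow hst g g h
  · rw [Nat.dist_comm, Nat.dist_eq_sub_of_le h, ← traceExp_mul_of_le hrow hst g g h]
    simp only [g, mul_comm]

end Trace

section Variance

variable {Ω : Type*} [Fintype Ω] {M : Matrix Ω Ω ℝ} {p : Ω → ℝ} {T : ℕ}

theorem traceExp_sum {ι : Type*} (s : Finset ι) (G : ι → (Fin T → Ω) → ℝ) :
    traceExp M p T (fun x => ∑ i ∈ s, G i x) = ∑ i ∈ s, traceExp M p T (G i) := by
  simp only [traceExp, mul_sum]
  exact sum_comm

theorem traceExp_div_const (F : (Fin T → Ω) → ℝ) (c : ℝ) :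
    traceExp M p T (fun x => F x / c) = traceExp M p T F / c := by
  simp only [traceExp, mul_div_assoc', sum_div]

variable [DecidableEq Ω]

theorem traceVar_succ (hrow : ∀ x, ∑ y, M x y = 1) (hst : ∀ y, ∑ x, p x * M x y = p y)
    (f : Ω → ℝ) (n : ℕ) :
    traceVar M p f (n + 1) =
      (∑ i : Fin (n + 1), ∑ j : Fin (n + 1), autocov M p f (Nat.dist i j)) / (n + 1 : ℝ) ^ 2 := by
  have hsq : ∀ x : Fin (n + 1) → Ω, ((∑ i, f (x i)) / ((n + 1 : ℕ) : ℝ) - stMean p f) ^ 2 =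
      (∑ i, ∑ j, (f (x i) - stMean p f) * (f (x j) - stMean p f)) / (n + 1 : ℝ) ^ 2 := fun x => by
    rw [← sum_mul_sum, ← sq, sum_sub_distrib, sum_const, card_univ, Fintype.card_fin,
      nsmul_eq_mul]
    push_cast
    field_simp
  simp_rw [traceVar, hsq, traceExp_div_const, traceExp_sum,
    traceExp_centered_mul_eq_autocov hrow hst]

theorem natCast_mul_traceVar (hrow : ∀ x, ∑ y, M x y = 1) (hst : ∀ y, ∑ x, p x * M x y = p y)
    (f : Ω → ℝ) (hT : 1 ≤ T) :
    (T : ℝ) * traceVar M p f T =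
      (∑ i ∈ range T, ∑ j ∈ range T, autocov M p f (Nat.dist i j)) / T := by
  obtain ⟨n, rfl⟩ := Nat.exists_eq_add_of_le' hT
  simp only [traceVar_succ hrow hst, sum_range]
  push_cast
  field_simp

end Variance

theorem sum_range_dist_right (γ : ℕ → ℝ) (T : ℕ) :
    ∑ i ∈ range T, γ (Nat.dist i T) = ∑ k ∈ range (T + 1), γ k - γ 0 := by
  rw [sum_range_succ', add_sub_cancel_right, ← sum_range_reflect]
  refine sum_congr rfl fun i hi => congrArg γ ?_
  have := mem_range.1 hi
  simp only [Nat.dist]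
  omega

theorem sum_range_sum_range_dist (γ : ℕ → ℝ) (T : ℕ) :
    ∑ i ∈ range T, ∑ j ∈ range T, γ (Nat.dist i j) =
      ∑ k ∈ range T, 2 * ((T : ℝ) - k) * γ k - T * γ 0 := by
  induction T with
  | zero => simp
  | succ T ih =>
    have hcol := sum_range_dist_right γ T
    have hrow : ∑ j ∈ range T, γ (Nat.dist T j) = ∑ k ∈ range (T + 1), γ k - γ 0 := by
      simp_rw [Nat.dist_comm T]; exact hcol
    have hweights : ∑ k ∈ range (T + 1), 2 * (((T + 1 : ℕ) : ℝ) - k) * γ k =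
        ∑ k ∈ range T, 2 * ((T : ℝ) - k) * γ k + 2 * ∑ k ∈ range (T + 1), γ k := by
      have hsplit : ∑ k ∈ range T, 2 * (((T + 1 : ℕ) : ℝ) - k) * γ k =
          ∑ k ∈ range T, (2 * ((T : ℝ) - k) * γ k + 2 * γ k) :=
        sum_congr rfl fun _ _ => by push_cast; ring
      rw [sum_range_succ _ T, hsplit, sum_add_distrib, sum_range_succ _ T, mul_add, mul_sum]
      push_cast
      ring
    calc ∑ i ∈ range (T + 1), ∑ j ∈ range (T + 1), γ (Nat.dist i j)
        = ∑ i ∈ range T, ∑ j ∈ range T, γ (Nat.dist i j) + ∑ i ∈ range T, γ (Nat.dist i T)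
            + ∑ j ∈ range T, γ (Nat.dist T j) + γ 0 := by
          simp only [sum_range_succ, sum_add_distrib, Nat.dist_self]; ring
      _ = _ := by rw [ih, hcol, hrow, hweights]; push_cast; ring

theorem sum_range_sum_range_dist_div_le {γ : ℕ → ℝ} (hγ : ∀ k, 0 ≤ γ k) {T T' : ℕ}
    (hT : 1 ≤ T) (hle : T ≤ T') :
    (∑ i ∈ range T, ∑ j ∈ range T, γ (Nat.dist i j)) / T ≤
      (∑ i ∈ range T', ∑ j ∈ range T', γ (Nat.dist i j)) / T' := by
  have hT0 : (0 : ℝ) < T := by exact_mod_cast hT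
  have hT'0 : (0 : ℝ) < T' := by exact_mod_cast hT.trans hle
  have hform : ∀ S : ℕ, 0 < (S : ℝ) → (∑ i ∈ range S, ∑ j ∈ range S, γ (Nat.dist i j)) / S =
      ∑ k ∈ range S, 2 * (1 - k / (S : ℝ)) * γ k - γ 0 := fun S hS => by
    rw [sum_range_sum_range_dist, sub_div, sum_div, mul_div_cancel_left₀ _ hS.ne']
    congr 1
    exact sum_congr rfl fun k _ => by field_simp
  rw [hform T hT0, hform T' hT'0, sub_le_sub_iff_right]
  calc ∑ k ∈ range T, 2 * (1 - k / (T : ℝ)) * γ k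
      ≤ ∑ k ∈ range T, 2 * (1 - k / (T' : ℝ)) * γ k := by
        refine sum_le_sum fun k _ => mul_le_mul_of_nonneg_right ?_ (hγ k)
        gcongr
    _ ≤ ∑ k ∈ range T', 2 * (1 - k / (T' : ℝ)) * γ k := by
        refine sum_le_sum_of_subset_of_nonneg (range_subset_range.2 hle) fun k hk _ => ?_
        have hk : (k : ℝ) / T' ≤ 1 := by
          rw [div_le_one hT'0]; exact_mod_cast (mem_range.1 hk).le
        exact mul_nonneg (by linarith) (hγ k)

theorem trace_variance_monotone_general
    {Ω : Type*} [Fintype Ω]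
    (M : Matrix Ω Ω ℝ) (pd : Ω → ℝ) (f : Ω → ℝ)
    (hM : IsStochastic M) (hpd : IsStationaryDist M pd)
    (hlazy : IsLazy M) (hrev : IsReversible M pd)
    (T T' : ℕ) (hT : 1 ≤ T) (hle : T ≤ T') :
    (T : ℝ) * traceVar M pd f T ≤ (T' : ℝ) * traceVar M pd f T' := by
  rw [natCast_mul_traceVar hM.2 hpd.2 f hT, natCast_mul_traceVar hM.2 hpd.2 f (hT.trans hle)]
  exact sum_range_sum_range_dist_div_le (hlazy.autocov_nonneg hM hrev hpd.1.1 f) hT hle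

/-- For a lazy reversible ergodic chain, `T ↦ T · v_T` is monotone:
for positive `T ≤ T'`, `T·v_T ≤ T'·v_{T'}` (in particular `v_π ≤ 2 v₂ ≤ 3 v₃ ≤ ⋯`,
since `v_π = v₁`). -/
theorem trace_variance_monotone
    {Ω : Type*} [Fintype Ω] [DecidableEq Ω]
    (M : Matrix Ω Ω ℝ) (pd : Ω → ℝ) (f : Ω → ℝ)
    (hM : IsStochastic M) (hpd : IsStationaryDist M pd) (herg : IsErgodic M)
    (hlazy : IsLazy M) (hrev : IsReversible M pd)
    (T T' : ℕ) (hT : 1 ≤ T) (hle : T ≤ T') :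
    (T : ℝ) * traceVar M pd f T ≤ (T' : ℝ) * traceVar M pd f T' :=
  trace_variance_monotone_general M pd f hM hpd hlazy hrev T T' hT hle
end

section
/- Let M be a lazy reversible ergodic Markov chain on a finite state space Ω with stationary distribution π, and let f : Ω → ℝ. Then for every i ≥ 1 the stationary autocovariance C_i = Cov(f(X₁), f(X_{1+i})) along a stationary trace of M is nonnegative; moreover C_i ≤ λ^i · v_π, where λ is the second largest absolute eigenvalue of M and v_π = Var_π[f]. -/
open Finset
open scoped BigOperators Classical

section MarkovDefs

variable {Ω : Type*} [Fintype Ω] [DecidableEq Ω]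

/-- `p` is a stationary distribution of the chain `M`. -/
def IsStationaryDistr (M : Matrix Ω Ω ℝ) (p : Ω → ℝ) : Prop :=
  IsProbDist p ∧ ∀ y, ∑ x, p x * M x y = p y

end MarkovDefs

/-! Ergodicity and stationarity make `π` positive, so `S = diag(√π) M diag(√π)⁻¹` is defined,
and detailed balance makes it symmetric. With `g = √π (f - E_π f)` one has `C_i = ⟪g, Sⁱ g⟫`
and `v_π = ⟪g, g⟫`; expanding `g` in an orthonormal eigenbasis `(eⱼ)` of `S`, with
`cⱼ = ⟪eⱼ, g⟫`, gives `C_i = ∑ⱼ μⱼⁱ cⱼ²` and `v_π = ∑ⱼ cⱼ²`. Every `μⱼ` is an eigenvalue of `M`,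
hence lies in `[0, 1]` by Gershgorin's theorem and laziness, so `C_i ≥ 0`. An eigenvector of `S`
for the eigenvalue `1` is `√π` times a harmonic function of `M`, which is constant by ergodicity,
so it is orthogonal to `g`: only eigenvalues `μⱼ ≤ λ` contribute to `C_i`. -/

namespace Matrix

variable {ι : Type*} [Fintype ι] [DecidableEq ι]

theorem pow_mulVec_of_mulVec_eq_smul {R : Type*} [CommSemiring R] {A : Matrix ι ι R} {v : ι → R}
    {μ : R} (h : A *ᵥ v = μ • v) (n : ℕ) : A ^ n *ᵥ v = μ ^ n • v := by
  induction n with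
  | zero => simp
  | succ n ih => rw [pow_succ', ← mulVec_mulVec, ih, mulVec_smul, h, smul_smul, pow_succ]

theorem vecMul_pow_of_vecMul_eq_self {R : Type*} [Semiring R] {A : Matrix ι ι R} {v : ι → R}
    (h : v ᵥ* A = v) (n : ℕ) : v ᵥ* A ^ n = v := by
  induction n with
  | zero => simp
  | succ n ih => rw [pow_succ, ← vecMul_vecMul, ih, h]

theorem IsHermitian.dotProduct_pow_mulVec_eq_sum {S : Matrix ι ι ℝ} (hS : S.IsHermitian)
    (g : ι → ℝ) (n : ℕ) :
    g ⬝ᵥ (S ^ n *ᵥ g) =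
      ∑ j, hS.eigenvalues j ^ n * (⇑(hS.eigenvectorBasis j) ⬝ᵥ g) ^ 2 := by
  set b := hS.eigenvectorBasis
  have hsymm : (S ^ n)ᵀ = S ^ n := by
    rw [transpose_pow, ← conjTranspose_eq_transpose_of_trivial, hS.eq]
  have hcoeff : ∀ j, (S ^ n *ᵥ g) ⬝ᵥ ⇑(b j) = hS.eigenvalues j ^ n * (⇑(b j) ⬝ᵥ g) := fun j => by
    rw [dotProduct_comm, dotProduct_mulVec, ← mulVec_transpose, hsymm,
      pow_mulVec_of_mulVec_eq_smul (hS.mulVec_eigenvectorBasis j), smul_dotProduct, smul_eq_mul]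
  have := b.sum_inner_mul_inner (WithLp.toLp 2 g) (WithLp.toLp 2 (S ^ n *ᵥ g))
  simp only [EuclideanSpace.inner_eq_star_dotProduct, star_trivial] at this
  rw [dotProduct_comm, ← this]
  refine Finset.sum_congr rfl fun j _ => ?_
  rw [hcoeff, dotProduct_comm]
  ring

theorem IsHermitian.dotProduct_pow_mulVec_nonneg {S : Matrix ι ι ℝ} (hS : S.IsHermitian)
    (h0 : ∀ j, 0 ≤ hS.eigenvalues j) (g : ι → ℝ) (n : ℕ) : 0 ≤ g ⬝ᵥ (S ^ n *ᵥ g) := by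
  rw [hS.dotProduct_pow_mulVec_eq_sum]
  exact Finset.sum_nonneg fun j _ => by have := h0 j; positivity

theorem IsHermitian.dotProduct_pow_mulVec_le {S : Matrix ι ι ℝ} (hS : S.IsHermitian)
    {g : ι → ℝ} {l : ℝ} (h0 : ∀ j, 0 ≤ hS.eigenvalues j)
    (hl : ∀ j, ⇑(hS.eigenvectorBasis j) ⬝ᵥ g ≠ 0 → hS.eigenvalues j ≤ l) (n : ℕ) :
    g ⬝ᵥ (S ^ n *ᵥ g) ≤ l ^ n * (g ⬝ᵥ g) := by
  have hnorm := hS.dotProduct_pow_mulVec_eq_sum g 0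
  simp only [pow_zero, one_mulVec, one_mul] at hnorm
  rw [hS.dotProduct_pow_mulVec_eq_sum, hnorm, Finset.mul_sum]
  refine Finset.sum_le_sum fun j _ => ?_
  by_cases hj : ⇑(hS.eigenvectorBasis j) ⬝ᵥ g = 0
  · simp [hj]
  · gcongr
    exacts [h0 j, hl j hj]

end Matrix

open Matrix

section Markov

variable {Ω : Type*} [Fintype Ω] [DecidableEq Ω] {M : Matrix Ω Ω ℝ} {p : Ω → ℝ} {μ : ℝ}

theorem IsEigenvalue.hasEigenvalue (h : IsEigenvalue M μ) :
    Module.End.HasEigenvalue (toLin' M) μ := by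
  obtain ⟨v, hv, hMv⟩ := h
  exact Module.End.hasEigenvalue_of_hasEigenvector
    ⟨Module.End.mem_eigenspace_iff.mpr (by simpa using hMv), hv⟩

theorem IsStochastic.exists_abs_sub_diag_le (hM : IsStochastic M) (h : IsEigenvalue M μ) :
    ∃ k, |μ - M k k| ≤ 1 - M k k := by
  obtain ⟨k, hk⟩ := eigenvalue_mem_ball h.hasEigenvalue
  refine ⟨k, ?_⟩
  rw [Metric.mem_closedBall, Real.dist_eq] at hk
  convert hk using 1
  rw [← hM.2 k, ← Finset.add_sum_erase _ _ (Finset.mem_univ k), add_sub_cancel_left]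
  exact Finset.sum_congr rfl fun j _ => (Real.norm_of_nonneg (hM.1 k j)).symm

theorem IsStochastic.abs_le_one_of_isEigenvalue (hM : IsStochastic M) (h : IsEigenvalue M μ) :
    |μ| ≤ 1 := by
  obtain ⟨k, hk⟩ := hM.exists_abs_sub_diag_le h
  have := abs_sub_abs_le_abs_sub μ (M k k)
  rw [abs_of_nonneg (hM.1 k k)] at this
  linarith

theorem IsStochastic.abs_le_secondEigenvalue (hM : IsStochastic M) (h : IsEigenvalue M μ)
    (h1 : μ ≠ 1) : |μ| ≤ secondEigenvalue M := by
  refine le_csSup ⟨1, ?_⟩ ⟨μ, h, h1, rfl⟩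
  rintro _ ⟨ν, hν, -, rfl⟩
  exact hM.abs_le_one_of_isEigenvalue hν

theorem IsLazy.nonneg_of_isEigenvalue (hlazy : IsLazy M) (hM : IsStochastic M)
    (h : IsEigenvalue M μ) : 0 ≤ μ := by
  obtain ⟨k, hk⟩ := hM.exists_abs_sub_diag_le h
  linarith [neg_abs_le (μ - M k k), hlazy k]

theorem IsErgodic.exists_eq_const_of_mulVec_eq_self (herg : IsErgodic M)
    (hrow : ∀ x, ∑ y, M x y = 1) {v : Ω → ℝ} (hv : M *ᵥ v = v) : ∃ c, v = fun _ => c := by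
  obtain ⟨k, hk⟩ := herg
  have hfix : ∀ w, M *ᵥ w = w → (M ^ k) *ᵥ w = w := fun w hw => by
    simpa using pow_mulVec_of_mulVec_eq_smul (μ := 1) (v := w) (by rwa [one_smul]) k
  rcases isEmpty_or_nonempty Ω with hΩ | hΩ
  · exact ⟨0, funext fun x => hΩ.elim x⟩
  obtain ⟨z, -, hz⟩ := Finset.exists_max_image Finset.univ v Finset.univ_nonempty
  refine ⟨v z, funext fun y => ?_⟩
  -- `v z` is an average of the `v y` with weights `(M ^ k) z y > 0`, so no `v y` is smaller.
  have hsum : ∑ y, (M ^ k) z y * (v z - v y) = 0 := by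
    have h1 := congrFun (hfix (fun _ => 1) (funext fun x => by simp [mulVec, dotProduct, hrow])) z
    have hv := congrFun (hfix v hv) z
    simp only [mulVec, dotProduct, mul_one] at h1 hv
    simp only [mul_sub, Finset.sum_sub_distrib, ← Finset.sum_mul, h1, hv, one_mul, sub_self]
  have hterm := (Finset.sum_eq_zero_iff_of_nonneg fun y _ => mul_nonneg (hk z y).le
    (sub_nonneg.mpr (hz y (Finset.mem_univ y)))).mp hsum y (Finset.mem_univ y)
  linarith [sub_eq_zero.mp ((mul_eq_zero.mp hterm).resolve_left (hk z y).ne')]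

theorem IsStationaryDistr.pos (hp : IsStationaryDistr M p) (herg : IsErgodic M) (y : Ω) :
    0 < p y := by
  obtain ⟨⟨hp0, hp1⟩, hst⟩ := hp
  obtain ⟨k, hk⟩ := herg
  obtain ⟨x, -, hx⟩ : ∃ x ∈ Finset.univ, 0 < p x :=
    Finset.exists_lt_of_sum_lt (f := 0) (by simp [hp1])
  rw [← congrFun (vecMul_pow_of_vecMul_eq_self (funext hst) k) y]
  exact Finset.sum_pos' (fun x _ => mul_nonneg (hp0 x) (hk x y).le)
    ⟨x, Finset.mem_univ x, mul_pos hx (hk x y)⟩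

end Markov

section Centered

variable {Ω : Type*} [Fintype Ω] {p : Ω → ℝ}

noncomputable def sqrtWeightedCentered (p f : Ω → ℝ) : Ω → ℝ :=
  fun x => √(p x) * (f x - stMean p f)

theorem stVar_eq_dotProduct_sqrtWeightedCentered (hp : ∀ x, 0 ≤ p x) (f : Ω → ℝ) :
    stVar p f = sqrtWeightedCentered p f ⬝ᵥ sqrtWeightedCentered p f := by
  refine Finset.sum_congr rfl fun x _ => ?_
  rw [sqrtWeightedCentered]
  linear_combination -(f x - stMean p f) ^ 2 * Real.mul_self_sqrt (hp x)

theorem sqrt_dotProduct_sqrtWeightedCentered (hp : IsProbDist p) (f : Ω → ℝ) :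
    (fun x => √(p x)) ⬝ᵥ sqrtWeightedCentered p f = 0 := by
  have hterm : ∀ x, √(p x) * sqrtWeightedCentered p f x = p x * f x - p x * stMean p f := by
    intro x
    rw [sqrtWeightedCentered, ← mul_assoc, Real.mul_self_sqrt (hp.1 x), mul_sub]
  simp only [dotProduct, hterm, Finset.sum_sub_distrib, ← Finset.sum_mul, hp.2, one_mul]
  exact sub_self _

end Centered

section Symmetrization

variable {Ω : Type*} [Fintype Ω] [DecidableEq Ω] {M : Matrix Ω Ω ℝ} {p : Ω → ℝ}

noncomputable def symmetrization (M : Matrix Ω Ω ℝ) (p : Ω → ℝ) : Matrix Ω Ω ℝ :=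
  diagonal (fun x => √(p x)) * M * diagonal (fun x => (√(p x))⁻¹)

theorem symmetrization_apply (M : Matrix Ω Ω ℝ) (p : Ω → ℝ) (x y : Ω) :
    symmetrization M p x y = √(p x) * M x y * (√(p y))⁻¹ := by
  simp [symmetrization, diagonal_mul, mul_diagonal]

theorem diagonal_inv_sqrt_mul_diagonal_sqrt (hp : ∀ x, 0 < p x) :
    diagonal (fun x => (√(p x))⁻¹) * diagonal (fun x => √(p x)) = 1 := by
  rw [diagonal_mul_diagonal, ← diagonal_one]
  exact congrArg diagonal (funext fun x => inv_mul_cancel₀ (Real.sqrt_pos.mpr (hp x)).ne')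

theorem diagonal_sqrt_mul_diagonal_inv_sqrt (hp : ∀ x, 0 < p x) :
    diagonal (fun x => √(p x)) * diagonal (fun x => (√(p x))⁻¹) = 1 := by
  rw [diagonal_mul_diagonal, ← diagonal_one]
  exact congrArg diagonal (funext fun x => mul_inv_cancel₀ (Real.sqrt_pos.mpr (hp x)).ne')

theorem symmetrization_mul_diagonal_sqrt (hp : ∀ x, 0 < p x) :
    symmetrization M p * diagonal (fun x => √(p x)) = diagonal (fun x => √(p x)) * M := by
  rw [symmetrization, Matrix.mul_assoc, diagonal_inv_sqrt_mul_diagonal_sqrt hp, Matrix.mul_one]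

theorem isHermitian_symmetrization (hp : ∀ x, 0 < p x) (hrev : IsReversible M p) :
    (symmetrization M p).IsHermitian := by
  ext x y
  have hx := Real.sqrt_pos.mpr (hp x)
  have hy := Real.sqrt_pos.mpr (hp y)
  rw [conjTranspose_apply, star_trivial, symmetrization_apply, symmetrization_apply]
  field_simp
  have := hrev y x
  rw [← Real.sq_sqrt (hp x).le, ← Real.sq_sqrt (hp y).le] at this
  linear_combination this

theorem mulVec_inv_sqrt_of_symmetrization_mulVec (hp : ∀ x, 0 < p x) {w : Ω → ℝ} {μ : ℝ}
    (h : symmetrization M p *ᵥ w = μ • w) :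
    M *ᵥ (diagonal (fun x => (√(p x))⁻¹) *ᵥ w) = μ • (diagonal (fun x => (√(p x))⁻¹) *ᵥ w) := by
  have hM : M = diagonal (fun x => (√(p x))⁻¹) *
      (symmetrization M p * diagonal fun x => √(p x)) := by
    rw [symmetrization_mul_diagonal_sqrt hp, ← Matrix.mul_assoc,
      diagonal_inv_sqrt_mul_diagonal_sqrt hp, Matrix.one_mul]
  rw [hM, ← mulVec_mulVec, ← mulVec_mulVec, mulVec_mulVec _ (diagonal fun x => √(p x)),
    diagonal_sqrt_mul_diagonal_inv_sqrt hp, one_mulVec, h, mulVec_smul]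

theorem isEigenvalue_of_symmetrization_mulVec (hp : ∀ x, 0 < p x) {w : Ω → ℝ} {μ : ℝ}
    (hw : w ≠ 0) (h : symmetrization M p *ᵥ w = μ • w) : IsEigenvalue M μ := by
  refine ⟨_, fun h0 => hw ?_, mulVec_inv_sqrt_of_symmetrization_mulVec hp h⟩
  rw [← one_mulVec w, ← diagonal_sqrt_mul_diagonal_inv_sqrt hp, ← mulVec_mulVec, h0, mulVec_zero]

theorem exists_eq_smul_sqrt_of_symmetrization_mulVec_eq_self (hM : IsStochastic M)
    (herg : IsErgodic M) (hp : ∀ x, 0 < p x) {w : Ω → ℝ}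
    (h : symmetrization M p *ᵥ w = w) : ∃ c : ℝ, w = c • fun x => √(p x) := by
  obtain ⟨c, hc⟩ := herg.exists_eq_const_of_mulVec_eq_self hM.2
    (by simpa only [one_smul] using
      mulVec_inv_sqrt_of_symmetrization_mulVec hp (μ := 1) (by rwa [one_smul]))
  refine ⟨c, ?_⟩
  rw [← one_mulVec w, ← diagonal_sqrt_mul_diagonal_inv_sqrt hp, ← mulVec_mulVec, hc]
  ext x
  simp [mulVec_diagonal, mul_comm]

theorem sqrtWeightedCentered_eq_diagonal_mulVec (p f : Ω → ℝ) :
    sqrtWeightedCentered p f = diagonal (fun x => √(p x)) *ᵥ fun x => f x - stMean p f := by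
  ext x
  rw [mulVec_diagonal, sqrtWeightedCentered]

theorem autocov_eq_dotProduct_symmetrization_pow (hp : ∀ x, 0 < p x) (f : Ω → ℝ) (n : ℕ) :
    autocov M p f n =
      sqrtWeightedCentered p f ⬝ᵥ (symmetrization M p ^ n *ᵥ sqrtWeightedCentered p f) := by
  have hconj : diagonal (fun x => √(p x)) * M ^ n =
      symmetrization M p ^ n * diagonal (fun x => √(p x)) :=
    (SemiconjBy.pow_right (symmetrization_mul_diagonal_sqrt hp).symm n).eq
  rw [sqrtWeightedCentered_eq_diagonal_mulVec, mulVec_mulVec, ← hconj, ← mulVec_mulVec,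
    ← sqrtWeightedCentered_eq_diagonal_mulVec, autocov]
  simp only [sqrtWeightedCentered, dotProduct, mulVec_diagonal]
  simp only [mulVec, dotProduct, Finset.mul_sum]
  refine Finset.sum_congr rfl fun x _ => Finset.sum_congr rfl fun y _ => ?_
  linear_combination -(M ^ n) x y * (f x - stMean p f) * (f y - stMean p f) *
    Real.mul_self_sqrt (hp x).le

end Symmetrization

theorem autocov_nonneg_and_le_general
    {Ω : Type*} [Fintype Ω] [DecidableEq Ω]
    (M : Matrix Ω Ω ℝ) (pd : Ω → ℝ) (f : Ω → ℝ)
    (hM : IsStochastic M) (hpd : IsStationaryDistr M pd) (herg : IsErgodic M)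
    (hlazy : IsLazy M) (hrev : IsReversible M pd)
    (i : ℕ) :
    0 ≤ autocov M pd f i ∧
      autocov M pd f i ≤ secondEigenvalue M ^ i * stVar pd f := by
  have hpos : ∀ x, 0 < pd x := hpd.pos herg
  have hS := isHermitian_symmetrization hpos hrev
  set g := sqrtWeightedCentered pd f
  have heig : ∀ j, IsEigenvalue M (hS.eigenvalues j) := fun j =>
    isEigenvalue_of_symmetrization_mulVec hpos
      (fun h => hS.eigenvectorBasis.orthonormal.ne_zero j (by ext x; exact congrFun h x))
      (hS.mulVec_eigenvectorBasis j)
  have hnonneg : ∀ j, 0 ≤ hS.eigenvalues j := fun j => hlazy.nonneg_of_isEigenvalue hM (heig j)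
  have hle : ∀ j, ⇑(hS.eigenvectorBasis j) ⬝ᵥ g ≠ 0 → hS.eigenvalues j ≤ secondEigenvalue M := by
    intro j hj
    have hne : hS.eigenvalues j ≠ 1 := by
      intro h1
      obtain ⟨c, hc⟩ := exists_eq_smul_sqrt_of_symmetrization_mulVec_eq_self hM herg hpos
        (by rw [hS.mulVec_eigenvectorBasis, h1, one_smul])
      rw [hc, smul_dotProduct, sqrt_dotProduct_sqrtWeightedCentered hpd.1, smul_zero] at hj
      exact hj rfl
    exact (le_abs_self _).trans (hM.abs_le_secondEigenvalue (heig j) hne)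
  rw [autocov_eq_dotProduct_symmetrization_pow hpos,
    stVar_eq_dotProduct_sqrtWeightedCentered fun x => (hpos x).le]
  exact ⟨hS.dotProduct_pow_mulVec_nonneg hnonneg g i, hS.dotProduct_pow_mulVec_le hnonneg hle i⟩

/-- For a lazy reversible ergodic chain, the stationary autocovariances
are nonnegative and satisfy `C_i ≤ λ^i · v_π`, where `λ` is the second largest absolute
eigenvalue. -/
theorem autocov_nonneg_and_le
    {Ω : Type*} [Fintype Ω] [DecidableEq Ω]
    (M : Matrix Ω Ω ℝ) (pd : Ω → ℝ) (f : Ω → ℝ)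
    (hM : IsStochastic M) (hpd : IsStationaryDistr M pd) (herg : IsErgodic M)
    (hlazy : IsLazy M) (hrev : IsReversible M pd)
    (i : ℕ) (hi : 1 ≤ i) :
    0 ≤ autocov M pd f i ∧
      autocov M pd f i ≤ secondEigenvalue M ^ i * stVar pd f :=
  autocov_nonneg_and_le_general M pd f hM hpd herg hlazy hrev i
end

section
/- Let M be a reversible ergodic Markov chain on a finite state space Ω with mixing time τ_mix, and let M^{(T)} be its T-trace chain. If T ≥ τ_mix(M), then the second largest absolute eigenvalue of M^{(T)} is at most 4/5. -/
open Finset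
open scoped BigOperators Classical

/-!
Every row of `M^{(T)}` depends only on the last coordinate of the current state, hence so does
`M^{(T)} v`, and an eigenvector `v` with eigenvalue `μ ≠ 0` is `u ∘ last` for an eigenvector `u`
of `M^T` with the same eigenvalue. If moreover `μ ≠ 1`, then `u` is orthogonal to `π`, so
evaluating `M^T u = μ u` at a maximiser `x` of `|u|` gives
`|μ| ≤ ‖M^T(x, ·) - π‖₁ = 2 d_TV(M^T(x, ·), π) ≤ 1/2` once `T ≥ τ_mix`.

Since `sInf ∅ = 0`, the hypothesis `T ≥ τ_mix` only says something once the chain is known to mix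
at some finite time. This is Doeblin's argument: a power `P = M^k` has all entries `≥ ε > 0`,
so each column of `P^m` oscillates by at most `(1 - |Ω| ε)^m`.
-/

section TraceChain

open Matrix

variable {Ω : Type*} [Fintype Ω]

theorem tvDist_vecMul_le {P : Matrix Ω Ω ℝ} {p ν : Ω → ℝ} {δ : ℝ} (hν : IsProbDist ν)
    (hP : ∀ x, tvDist (P x) p ≤ δ) : tvDist (ν ᵥ* P) p ≤ δ := by
  have hdiff : ∀ y, (ν ᵥ* P) y - p y = ∑ x, ν x * (P x y - p y) := fun y => by
    simp only [vecMul, dotProduct, mul_sub, Finset.sum_sub_distrib, ← Finset.sum_mul, hν.2,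
      one_mul]
  calc tvDist (ν ᵥ* P) p = (∑ y, |∑ x, ν x * (P x y - p y)|) / 2 := by simp only [tvDist, hdiff]
    _ ≤ (∑ y, ∑ x, ν x * |P x y - p y|) / 2 := by
        gcongr with y
        refine (Finset.abs_sum_le_sum_abs _ _).trans_eq (Finset.sum_congr rfl fun x _ => ?_)
        rw [abs_mul, abs_of_nonneg (hν.1 x)]
    _ = ∑ x, ν x * tvDist (P x) p := by
        rw [Finset.sum_comm, Finset.sum_div]
        refine Finset.sum_congr rfl fun x _ => ?_
        rw [tvDist, ← Finset.mul_sum, mul_div_assoc]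
    _ ≤ ∑ x, ν x * δ := by gcongr with x; exacts [hν.1 x, hP x]
    _ = δ := by rw [← Finset.sum_mul, hν.2, one_mul]

theorem abs_le_of_isEigenvalue {P : Matrix Ω Ω ℝ} {p : Ω → ℝ} (hp : p ᵥ* P = p) {δ : ℝ}
    (hP : ∀ x, tvDist (P x) p ≤ δ) {μ : ℝ} (hμ : IsEigenvalue P μ) (hμ1 : μ ≠ 1) :
    |μ| ≤ 2 * δ := by
  obtain ⟨u, hu0, hu⟩ := hμ
  have horth : p ⬝ᵥ u = 0 := by
    have hfix : μ * (p ⬝ᵥ u) = p ⬝ᵥ u :=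
      calc μ * (p ⬝ᵥ u) = p ⬝ᵥ (μ • u) := by rw [dotProduct_smul, smul_eq_mul]
        _ = p ⬝ᵥ u := by rw [← hu, dotProduct_mulVec, hp]
    have : (μ - 1) * (p ⬝ᵥ u) = 0 := by linarith
    exact (mul_eq_zero.1 this).resolve_left (sub_ne_zero.2 hμ1)
  obtain ⟨x₀, hx₀⟩ : ∃ x, u x ≠ 0 := Function.ne_iff.1 hu0
  obtain ⟨x, -, hx⟩ :=
    Finset.exists_max_image Finset.univ (fun y => |u y|) ⟨x₀, Finset.mem_univ _⟩
  have hux : 0 < |u x| := (abs_pos.2 hx₀).trans_le (hx x₀ (Finset.mem_univ _))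
  have hμx : μ * u x = ∑ y, (P x y - p y) * u y := by
    rw [← smul_eq_mul, ← Pi.smul_apply, ← hu, ← sub_zero ((P *ᵥ u) x), ← horth]
    simp only [mulVec, dotProduct, ← Finset.sum_sub_distrib, sub_mul]
  have hbound : |μ| * |u x| ≤ 2 * δ * |u x| :=
    calc |μ| * |u x| = |∑ y, (P x y - p y) * u y| := by rw [← abs_mul, hμx]
      _ ≤ ∑ y, |P x y - p y| * |u x| := (Finset.abs_sum_le_sum_abs _ _).trans
          (Finset.sum_le_sum fun y _ => by
            rw [abs_mul]; exact mul_le_mul_of_nonneg_left (hx y (Finset.mem_univ y)) (abs_nonneg _))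
      _ = 2 * tvDist (P x) p * |u x| := by rw [tvDist, ← Finset.sum_mul]; ring
      _ ≤ 2 * δ * |u x| := by gcongr; exact hP x
  exact le_of_mul_le_mul_right hbound hux

theorem IsStochastic.card_mul_le_one {P : Matrix Ω Ω ℝ} (hP : IsStochastic P) {ε : ℝ}
    (hε : ∀ x y, ε ≤ P x y) (x : Ω) : Fintype.card Ω * ε ≤ 1 :=
  calc (Fintype.card Ω : ℝ) * ε = ∑ _y : Ω, ε := by simp
    _ ≤ ∑ y, P x y := Finset.sum_le_sum fun y _ => hε x y
    _ = 1 := hP.2 x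

theorem IsStochastic.mulVec_sub_mulVec_le {P : Matrix Ω Ω ℝ} (hP : IsStochastic P) {ε : ℝ}
    (hε : ∀ x y, ε ≤ P x y) {f : Ω → ℝ} {d : ℝ} (hf : ∀ z z', f z - f z' ≤ d) (x x' : Ω) :
    (P *ᵥ f) x - (P *ᵥ f) x' ≤ (1 - Fintype.card Ω * ε) * d := by
  set c : ℝ := 1 - Fintype.card Ω * ε
  obtain ⟨zM, -, hzM⟩ := Finset.exists_max_image Finset.univ f ⟨x, Finset.mem_univ x⟩
  obtain ⟨zm, -, hzm⟩ := Finset.exists_min_image Finset.univ f ⟨x, Finset.mem_univ x⟩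
  have hsplit : ∀ w, (P *ᵥ f) w = ε * ∑ z, f z + ∑ z, (P w z - ε) * f z := fun w => by
    simp only [mulVec, dotProduct, Finset.mul_sum, ← Finset.sum_add_distrib]
    exact Finset.sum_congr rfl fun z _ => by ring
  have hexcess : ∀ w, ∑ z, (P w z - ε) = c := fun w => by
    simp [c, Finset.sum_sub_distrib, hP.2 w]
  have hup : ∑ z, (P x z - ε) * f z ≤ c * f zM := by
    rw [← hexcess x, Finset.sum_mul]
    exact Finset.sum_le_sum fun z _ =>
      mul_le_mul_of_nonneg_left (hzM z (Finset.mem_univ z)) (sub_nonneg.2 (hε x z))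
  have hlow : c * f zm ≤ ∑ z, (P x' z - ε) * f z := by
    rw [← hexcess x', Finset.sum_mul]
    exact Finset.sum_le_sum fun z _ =>
      mul_le_mul_of_nonneg_left (hzm z (Finset.mem_univ z)) (sub_nonneg.2 (hε x' z))
  have hosc : c * (f zM - f zm) ≤ c * d :=
    mul_le_mul_of_nonneg_left (hf zM zm) (sub_nonneg.2 (hP.card_mul_le_one hε x))
  rw [hsplit, hsplit]
  linarith [mul_sub c (f zM) (f zm)]

theorem traceChain_mulVec_apply (M : Matrix Ω Ω ℝ) (n : ℕ) (v : (Fin (n + 1) → Ω) → ℝ)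
    (a : Fin (n + 1) → Ω) :
    (traceChain M n *ᵥ v) a = (traceChain M n *ᵥ v) (fun _ => a (Fin.last n)) :=
  rfl

variable [DecidableEq Ω]

theorem vecMul_pow_eq_self {M : Matrix Ω Ω ℝ} {p : Ω → ℝ} (hp : p ᵥ* M = p) (t : ℕ) :
    p ᵥ* M ^ t = p := by
  induction t with
  | zero => exact vecMul_one p
  | succ t ih => rw [pow_succ, ← vecMul_vecMul, ih, hp]

theorem IsStochastic.pow {M : Matrix Ω Ω ℝ} (hM : IsStochastic M) (t : ℕ) :
    IsStochastic (M ^ t) :=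
  mem_rowStochastic_iff_sum.1 (pow_mem (mem_rowStochastic_iff_sum.2 hM) t)

theorem IsStationaryDist.pow {M : Matrix Ω Ω ℝ} {p : Ω → ℝ} (hp : IsStationaryDist M p)
    (t : ℕ) : IsStationaryDist (M ^ t) p :=
  ⟨hp.1, fun y => congrFun (vecMul_pow_eq_self (funext hp.2) t) y⟩

/-- `mixingTime M p` is by definition `sInf {t | IsMixedBy M p t}`. -/
def IsMixedBy (M : Matrix Ω Ω ℝ) (p : Ω → ℝ) (t : ℕ) : Prop :=
  ∀ ν : Ω → ℝ, IsProbDist ν → tvDist (ν ᵥ* M ^ t) p ≤ 1 / 4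

theorem isMixedBy_iff {M : Matrix Ω Ω ℝ} {p : Ω → ℝ} {t : ℕ} :
    IsMixedBy M p t ↔ ∀ x, tvDist ((M ^ t) x) p ≤ 1 / 4 := by
  classical
  refine ⟨fun h x => ?_, fun h ν hν => tvDist_vecMul_le hν h⟩
  simpa only [single_one_vecMul, row] using h (Pi.single x 1) (single_mem_stdSimplex ℝ x)

theorem IsMixedBy.succ {M : Matrix Ω Ω ℝ} {p : Ω → ℝ} {t : ℕ} (hM : IsStochastic M)
    (h : IsMixedBy M p t) : IsMixedBy M p (t + 1) := by
  rw [isMixedBy_iff] at h ⊢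
  intro x
  rw [pow_succ']
  exact tvDist_vecMul_le ⟨hM.1 x, hM.2 x⟩ h

theorem isMixedBy_of_mixingTime_le {M : Matrix Ω Ω ℝ} {p : Ω → ℝ} {t : ℕ}
    (hM : IsStochastic M) (hex : ∃ s, IsMixedBy M p s) (ht : mixingTime M p ≤ t) :
    IsMixedBy M p t := by
  induction t, ht using Nat.le_induction with
  | base => exact Nat.sInf_mem hex
  | succ t _ ih => exact ih.succ hM

theorem IsStochastic.pow_apply_sub_pow_apply_le {P : Matrix Ω Ω ℝ} (hP : IsStochastic P)
    {ε : ℝ} (hε : ∀ x y, ε ≤ P x y) (m : ℕ) (x x' y : Ω) :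
    (P ^ m) x y - (P ^ m) x' y ≤ (1 - Fintype.card Ω * ε) ^ m := by
  induction m generalizing x x' with
  | zero => simp only [pow_zero, one_apply]; split_ifs <;> norm_num
  | succ m ih =>
    rw [pow_succ' P, pow_succ']
    exact hP.mulVec_sub_mulVec_le hε (f := fun z => (P ^ m) z y) ih x x'

theorem IsStochastic.tvDist_pow_apply_le {P : Matrix Ω Ω ℝ} {p : Ω → ℝ} (hP : IsStochastic P)
    (hp : IsStationaryDist P p) {ε : ℝ} (hε : ∀ x y, ε ≤ P x y) (m : ℕ) (x : Ω) :
    tvDist ((P ^ m) x) p ≤ Fintype.card Ω * (1 - Fintype.card Ω * ε) ^ m / 2 := by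
  set c : ℝ := 1 - Fintype.card Ω * ε
  have hentry : ∀ y, |(P ^ m) x y - p y| ≤ c ^ m := fun y => by
    have hpy : (P ^ m) x y - p y = ∑ x', p x' * ((P ^ m) x y - (P ^ m) x' y) := by
      simp only [mul_sub, Finset.sum_sub_distrib, ← Finset.sum_mul, hp.1.2, one_mul,
        ← (hp.pow m).2 y]
    rw [hpy]
    calc |∑ x', p x' * ((P ^ m) x y - (P ^ m) x' y)|
        ≤ ∑ x', p x' * |(P ^ m) x y - (P ^ m) x' y| :=
          (Finset.abs_sum_le_sum_abs _ _).trans_eq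
            (Finset.sum_congr rfl fun x' _ => by rw [abs_mul, abs_of_nonneg (hp.1.1 x')])
      _ ≤ ∑ x', p x' * c ^ m := by
          gcongr with x' _
          · exact hp.1.1 x'
          · exact abs_sub_le_iff.2 ⟨hP.pow_apply_sub_pow_apply_le hε m x x' y,
              hP.pow_apply_sub_pow_apply_le hε m x' x y⟩
      _ = c ^ m := by rw [← Finset.sum_mul, hp.1.2, one_mul]
  calc tvDist ((P ^ m) x) p ≤ (∑ _y : Ω, c ^ m) / 2 := by
        rw [tvDist]; gcongr with y; exact hentry y
    _ = Fintype.card Ω * c ^ m / 2 := by simp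

theorem exists_isMixedBy {M : Matrix Ω Ω ℝ} {p : Ω → ℝ} (hM : IsStochastic M)
    (hp : IsStationaryDist M p) (herg : IsErgodic M) : ∃ t, IsMixedBy M p t := by
  rcases isEmpty_or_nonempty Ω with hΩ | ⟨⟨x₀⟩⟩
  · exact ⟨0, fun ν hν => by simpa using hν.2⟩
  obtain ⟨k, hk⟩ := herg
  set N : ℝ := (Fintype.card Ω : ℝ)
  have hN : 0 < N := Nat.cast_pos.2 (Fintype.card_pos_iff.2 ⟨x₀⟩)
  obtain ⟨⟨a, b⟩, -, hab⟩ := Finset.exists_min_image Finset.univ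
    (fun z : Ω × Ω => (M ^ k) z.1 z.2) ⟨(x₀, x₀), Finset.mem_univ _⟩
  have hε : ∀ x y, (M ^ k) a b ≤ (M ^ k) x y := fun x y => hab (x, y) (Finset.mem_univ _)
  have hc : 1 - N * (M ^ k) a b < 1 := by nlinarith [hk a b]
  obtain ⟨m, hm⟩ := exists_pow_lt_of_lt_one (show 0 < 1 / (2 * N) by positivity) hc
  refine ⟨k * m, isMixedBy_iff.2 fun x => ?_⟩
  rw [pow_mul]
  calc tvDist (((M ^ k) ^ m) x) p ≤ N * (1 - N * (M ^ k) a b) ^ m / 2 :=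
        (hM.pow k).tvDist_pow_apply_le (hp.pow k) hε m x
    _ ≤ N * (1 / (2 * N)) / 2 := by gcongr
    _ = 1 / 4 := by field_simp; ring

theorem traceChain_mulVec_comp_last (M : Matrix Ω Ω ℝ) (u : Ω → ℝ) (n : ℕ)
    (a : Fin (n + 1) → Ω) :
    (traceChain M n *ᵥ fun b => u (b (Fin.last n))) a = (M ^ (n + 1) *ᵥ u) (a (Fin.last n)) := by
  induction n with
  | zero =>
    rw [mulVec, dotProduct, ← (Equiv.funUnique (Fin 1) Ω).symm.sum_comp]
    simp [traceChain, mulVec, dotProduct, Equiv.funUnique]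
  | succ n ih =>
    have hcons : ∀ y c, traceChain M (n + 1) a (Fin.cons y c) =
        M (a (Fin.last _)) y * traceChain M n (fun _ => y) c := fun y c => by
      simp only [traceChain, Fin.prod_univ_succ, Fin.cons_zero, Fin.cons_succ,
        ← Fin.succ_castSucc, Fin.castSucc_zero]
    calc (traceChain M (n + 1) *ᵥ fun b => u (b (Fin.last (n + 1)))) a
        = ∑ y, ∑ c : Fin (n + 1) → Ω, traceChain M (n + 1) a (Fin.cons y c) *
            u ((Fin.cons y c : Fin (n + 2) → Ω) (Fin.last (n + 1))) := by
          rw [mulVec, dotProduct, ← (Fin.consEquiv _).sum_comp, Fintype.sum_prod_type]; rfl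
      _ = ∑ y, M (a (Fin.last _)) y *
            (traceChain M n *ᵥ fun c => u (c (Fin.last n))) (fun _ => y) := by
          simp only [hcons, mulVec, dotProduct, Finset.mul_sum, mul_assoc, ← Fin.succ_last,
            Fin.cons_succ]
      _ = (M ^ (n + 2) *ᵥ u) (a (Fin.last _)) := by
          simp only [ih]
          rw [pow_succ' M (n + 1), ← mulVec_mulVec]
          rfl

theorem IsEigenvalue.pow_of_traceChain {M : Matrix Ω Ω ℝ} {n : ℕ} {μ : ℝ}
    (h : IsEigenvalue (traceChain M n) μ) (hμ : μ ≠ 0) : IsEigenvalue (M ^ (n + 1)) μ := by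
  obtain ⟨v, hv0, hv⟩ := h
  set u : Ω → ℝ := fun x => v (fun _ => x)
  have hvu : v = fun b => u (b (Fin.last n)) := funext fun b => by
    have hb := congrFun hv b
    have hlast := congrFun hv (fun _ => b (Fin.last n))
    rw [traceChain_mulVec_apply] at hb
    simp only [Pi.smul_apply, smul_eq_mul] at hb hlast
    exact mul_left_cancel₀ hμ (hb.symm.trans hlast)
  refine ⟨u, fun hu => hv0 (by rw [hvu, hu]; rfl), funext fun x => ?_⟩
  have hx := congrFun hv (fun _ => x)
  rw [hvu, traceChain_mulVec_comp_last] at hx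
  exact hx

end TraceChain

theorem traceChain_secondEigenvalue_le_general
    {Ω : Type*} [Fintype Ω] [DecidableEq Ω]
    (M : Matrix Ω Ω ℝ) (pd : Ω → ℝ)
    (hM : IsStochastic M) (hpd : IsStationaryDist M pd) (herg : IsErgodic M)
    (n : ℕ) (hT : mixingTime M pd ≤ n + 1) :
    secondEigenvalue (traceChain M n) ≤ 4 / 5 := by
  have hmix : ∀ x, tvDist ((M ^ (n + 1)) x) pd ≤ 1 / 4 :=
    isMixedBy_iff.1 (isMixedBy_of_mixingTime_le hM (exists_isMixedBy hM hpd herg) hT)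
  refine Real.sSup_le ?_ (by norm_num)
  rintro _ ⟨μ, hμ, hμ1, rfl⟩
  rcases eq_or_ne μ 0 with rfl | hμ0
  · norm_num
  have := abs_le_of_isEigenvalue (vecMul_pow_eq_self (funext hpd.2) _) hmix
    (hμ.pow_of_traceChain hμ0) hμ1
  linarith

/-- If `M` is reversible and ergodic and the trace length `T = n + 1`
is at least the mixing time of `M`, then the second largest absolute eigenvalue of the
`T`-trace chain `M^{(T)}` is at most `4/5`. -/
theorem traceChain_secondEigenvalue_le
    {Ω : Type*} [Fintype Ω] [DecidableEq Ω]
    (M : Matrix Ω Ω ℝ) (pd : Ω → ℝ)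
    (hM : IsStochastic M) (hpd : IsStationaryDist M pd) (herg : IsErgodic M)
    (hrev : IsReversible M pd)
    (n : ℕ) (hT : mixingTime M pd ≤ n + 1) :
    secondEigenvalue (traceChain M n) ≤ 4 / 5 :=
  traceChain_secondEigenvalue_le_general M pd hM hpd herg n hT
end

section
/- Let G = (V,E) be a finite graph, k a number of colors, V_j ⊆ V a subset, B(V_j) = {(u,v) ∈ E : u ∈ V_j, v ∈ V \ V_j} its cut set, and G′ = (V, E \ B(V_j)). If γ is drawn uniformly at random from the proper k-colorings of G′, then the probability that some edge (u,v) ∈ B(V_j) has γ(u) = γ(v) is at most #B(V_j)/k. -/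
/-!
Adding a constant `c ∈ ℤ/k` to the colours of every vertex of `Vj` maps proper colourings of `G′`
to proper colourings of `G′`, since no edge of `G′` crosses the cut. For a cut edge `(u, v)` it
shifts `γ u - γ v` by `c`, so the `k` values of `γ u - γ v` are equally likely and `γ u = γ v` has
probability exactly `1/k`. The union bound over the cut edges gives `#B(Vj)/k`.
-/

open Finset

section ShiftOn

variable {V G : Type*} [DecidableEq V] (s : Finset V)

def shiftOn [Add G] (c : G) (γ : V → G) : V → G :=
  s.piecewise (fun v => γ v + c) γ

variable {s}

@[simp]
theorem shiftOn_apply_of_mem [Add G] {c : G} {γ : V → G} {v : V} (hv : v ∈ s) :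
    shiftOn s c γ v = γ v + c :=
  s.piecewise_eq_of_mem _ _ hv

@[simp]
theorem shiftOn_apply_of_notMem [Add G] {c : G} {γ : V → G} {v : V} (hv : v ∉ s) :
    shiftOn s c γ v = γ v :=
  s.piecewise_eq_of_notMem _ _ hv

theorem shiftOn_neg_shiftOn [AddGroup G] (c : G) (γ : V → G) :
    shiftOn s (-c) (shiftOn s c γ) = γ := by
  funext v
  by_cases hv : v ∈ s <;> simp [hv]

theorem shiftOn_shiftOn_neg [AddGroup G] (c : G) (γ : V → G) :
    shiftOn s c (shiftOn s (-c) γ) = γ := by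
  simpa using shiftOn_neg_shiftOn (s := s) (-c) γ

theorem shiftOn_apply_eq_shiftOn_apply_iff [AddGroup G] {c : G} {γ : V → G} {u v : V}
    (h : u ∈ s ↔ v ∈ s) : shiftOn s c γ u = shiftOn s c γ v ↔ γ u = γ v := by
  by_cases hu : u ∈ s
  · simp [hu, h.1 hu]
  · simp [hu, mt h.2 hu]

theorem shiftOn_apply_sub_shiftOn_apply [AddCommGroup G] (c : G) (γ : V → G) {u v : V}
    (hu : u ∈ s) (hv : v ∉ s) : shiftOn s c γ u - shiftOn s c γ v = γ u - γ v + c := by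
  simp [hu, hv, add_sub_right_comm]

theorem card_filter_apply_eq_apply_mul_card [AddCommGroup G] [Fintype G] [DecidableEq G]
    {Γ : Finset (V → G)} (hΓ : ∀ c, ∀ γ ∈ Γ, shiftOn s c γ ∈ Γ) {u v : V}
    (hu : u ∈ s) (hv : v ∉ s) :
    #{γ ∈ Γ | γ u = γ v} * Fintype.card G = #Γ := by
  have fiber (c : G) : #{γ ∈ Γ | γ u - γ v = c} = #{γ ∈ Γ | γ u = γ v} := by
    refine card_nbij' (shiftOn s (-c)) (shiftOn s c) ?_ ?_ (fun γ _ => shiftOn_shiftOn_neg c γ)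
      (fun γ _ => shiftOn_neg_shiftOn c γ)
    · intro γ hγ
      simp only [coe_filter, Set.mem_ofPred_eq] at hγ ⊢
      refine ⟨hΓ _ γ hγ.1, sub_eq_zero.1 ?_⟩
      rw [shiftOn_apply_sub_shiftOn_apply _ _ hu hv, hγ.2, add_neg_cancel]
    · intro γ hγ
      simp only [coe_filter, Set.mem_ofPred_eq] at hγ ⊢
      refine ⟨hΓ _ γ hγ.1, ?_⟩
      rw [shiftOn_apply_sub_shiftOn_apply _ _ hu hv, hγ.2, sub_self, zero_add]
  calc #{γ ∈ Γ | γ u = γ v} * Fintype.card G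
      = ∑ c : G, #{γ ∈ Γ | γ u - γ v = c} := by simp [fiber, mul_comm]
    _ = #Γ := (card_eq_sum_card_fiberwise fun _ _ => mem_coe.2 (mem_univ _)).symm

end ShiftOn

theorem card_filter_exists_le_sum {α ι : Type*} [DecidableEq α] (s : Finset α) (t : Finset ι)
    (p : ι → α → Prop) [∀ i, DecidablePred (p i)] :
    #{a ∈ s | ∃ i ∈ t, p i a} ≤ ∑ i ∈ t, #{a ∈ s | p i a} := by
  refine (card_le_card ?_).trans card_biUnion_le
  intro a ha
  obtain ⟨has, i, hi, hpa⟩ := mem_filter.1 ha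
  exact mem_biUnion.2 ⟨i, hi, mem_filter.2 ⟨has, hpa⟩⟩

theorem cut_monochromatic_prob_general
    {V : Type*} [Fintype V] [DecidableEq V]
    (E : Finset (V × V))
    (k : ℕ) (Vj : Finset V)
    (B E' : Finset (V × V)) (Γ' : Finset (V → Fin k))
    (hB : B = E.filter fun e => e.1 ∈ Vj ∧ e.2 ∉ Vj)
    (hE' : E' = E.filter fun e => e.1 ∈ Vj ↔ e.2 ∈ Vj)
    (hΓ' : Γ' = Finset.univ.filter fun γ : V → Fin k => ∀ e ∈ E', γ e.1 ≠ γ e.2) :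
    ((Γ'.filter fun γ => ∃ e ∈ B, γ e.1 = γ e.2).card : ℝ) / (Γ'.card : ℝ) ≤
      (B.card : ℝ) / (k : ℝ) := by
  obtain rfl | hk := k.eq_zero_or_pos
  · have : (Γ'.filter fun γ => ∃ e ∈ B, γ e.1 = γ e.2) = ∅ :=
      filter_eq_empty_iff.2 fun γ _ ⟨e, _, _⟩ => (γ e.1).elim0
    rw [this, card_empty, Nat.cast_zero, zero_div]
    positivity
  have := NeZero.of_pos hk
  have hshift : ∀ c, ∀ γ ∈ Γ', shiftOn Vj c γ ∈ Γ' := by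
    simp only [hΓ', hE', mem_filter, mem_univ, true_and]
    exact fun c γ hγ e he => (shiftOn_apply_eq_shiftOn_apply_iff he.2).not.2 (hγ e he)
  have hmono : ∀ e ∈ B, #{γ ∈ Γ' | γ e.1 = γ e.2} * k = #Γ' := fun e he => by
    rw [hB, mem_filter] at he
    simpa using card_filter_apply_eq_apply_mul_card hshift he.2.1 he.2.2
  have hbad : #{γ ∈ Γ' | ∃ e ∈ B, γ e.1 = γ e.2} * k ≤ #B * #Γ' :=
    calc #{γ ∈ Γ' | ∃ e ∈ B, γ e.1 = γ e.2} * k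
        ≤ (∑ e ∈ B, #{γ ∈ Γ' | γ e.1 = γ e.2}) * k :=
          Nat.mul_le_mul_right _ (card_filter_exists_le_sum _ _ _)
      _ = #B * #Γ' := by rw [sum_mul, sum_congr rfl hmono, sum_const, smul_eq_mul]
  obtain hΓ0 | hΓpos := (#Γ').eq_zero_or_pos
  · simp only [hΓ0, Nat.cast_zero, div_zero]
    positivity
  rw [div_le_div_iff₀ (by exact_mod_cast hΓpos) (by exact_mod_cast hk)]
  exact_mod_cast hbad

/-- Let `G = (V, E)` be a finite (undirected, i.e. symmetric) graph,
`k` a number of colors, `Vj ⊆ V`, `B = B(Vj) = {(u,v) ∈ E : u ∈ Vj, v ∉ Vj}` the cut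
set, and `G' = (V, E \ B(Vj))` the graph with the cut edges removed (`E'` below keeps
exactly the edges whose endpoints lie on the same side of the cut). If `γ` is drawn
uniformly at random from the proper `k`-colorings of `G'`, then the probability that
some cut edge `(u,v) ∈ B` is monochromatic (`γ u = γ v`) is at most `#B / k`. -/
theorem cut_monochromatic_prob
    {V : Type*} [Fintype V] [DecidableEq V]
    (E : Finset (V × V)) (hsym : ∀ u v : V, (u, v) ∈ E → (v, u) ∈ E)
    (k : ℕ) (Vj : Finset V)
    (B E' : Finset (V × V)) (Γ' : Finset (V → Fin k))
    (hB : B = E.filter fun e => e.1 ∈ Vj ∧ e.2 ∉ Vj)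
    (hE' : E' = E.filter fun e => e.1 ∈ Vj ↔ e.2 ∈ Vj)
    (hΓ' : Γ' = Finset.univ.filter fun γ : V → Fin k => ∀ e ∈ E', γ e.1 ≠ γ e.2) :
    ((Γ'.filter fun γ => ∃ e ∈ B, γ e.1 = γ e.2).card : ℝ) / (Γ'.card : ℝ) ≤
      (B.card : ℝ) / (k : ℝ) :=
  cut_monochromatic_prob_general E k Vj B E' Γ' hB hE' hΓ'
end
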